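/- arXiv:2409.18000 — 3 statements merged into one kernel-verified Lean document; each statement's English description precedes it below -/
import Mathlib

section
/- Let X be a set with pseudometric d, I finite, c̄ : I → X → ℝ a family of L_x-Lipschitz functions, L̄ₜ ≥ 0, and let l̃ : I → X → ℝ satisfy l̃ i x ≤ c̄ i x for all i, x. Define S' = { x ∈ X | ∀ i ∈ I, ∃ x' ∈ S, l̃ i x' − L_x·d(x,x') − L̄ₜ ≥ 0 } for a given S ⊆ X. Then S' ⊆ R_{L̄ₜ}(S), where R_a(S) = S ∪ { x | ∀ i, ∃ x' ∈ S, c̄ i x' − L_x·d(x,x') − a ≥ 0 }. Consequently, by induction, the sequence defined by S̲₀ = S₀ and S̲_{k+1} = { x | ∀ i, ∃ x' ∈ S̲ₖ, l̃ₖ i x' − L_x·d(x,x') − L̄ₜ ≥ 0 } (for lower bounds l̃ₖ with l̃ₖ i x ≤ c̄ i x) satisfies S̲ₖ ⊆ R̄_{L̄ₜ}(S₀) for all k. -/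
def Rop {X : Type*} [PseudoMetricSpace X] {I : Type*}
    (cbar : I → X → ℝ) (Lx a : ℝ) (S : Set X) : Set X :=
  S ∪ {x : X | ∀ i : I, ∃ x' ∈ S, cbar i x' - Lx * dist x x' - a ≥ 0}

lemma Rop_mono {X : Type*} [PseudoMetricSpace X] {I : Type*}
    (cbar : I → X → ℝ) (Lx a : ℝ) {S T : Set X} (h : S ⊆ T) :
    Rop cbar Lx a S ⊆ Rop cbar Lx a T := by
  rintro x (hx | hx)
  · exact Or.inl (h hx)
  · exact Or.inr fun i => (hx i).imp fun x' ⟨h1, h2⟩ => ⟨h h1, h2⟩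

lemma Rop_subset {X : Type*} [PseudoMetricSpace X] {I : Type*}
    (cbar : I → X → ℝ) (Lx a : ℝ) (S : Set X) : S ⊆ Rop cbar Lx a S :=
  Set.subset_union_left

lemma Rop_iter_mono {X : Type*} [PseudoMetricSpace X] {I : Type*}
    (cbar : I → X → ℝ) (Lx a : ℝ) (S : Set X) {m n : ℕ} (h : m ≤ n) :
    (Rop cbar Lx a)^[m] S ⊆ (Rop cbar Lx a)^[n] S := by
  induction n with
  | zero => simpa [Nat.le_zero.mp h]
  | succ n ih =>
    rcases Nat.lt_or_ge m (n+1) with h' | h'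
    · refine (ih (Nat.lt_succ_iff.mp h')).trans ?_
      rw [Function.iterate_succ_apply']
      exact Rop_subset _ _ _ _
    · simp [Nat.le_antisymm h h']

theorem stmt_8 {X : Type*} [PseudoMetricSpace X] {I : Type*} [Fintype I]
    (cbar : I → X → ℝ) (Lx : ℝ) (hLx : 0 ≤ Lx)
    (hlip : ∀ i x y, |cbar i x - cbar i y| ≤ Lx * dist x y)
    (Lt : ℝ) (hLt : 0 ≤ Lt)
    (ltil : ℕ → I → X → ℝ)
    (hltil : ∀ k i x, ltil k i x ≤ cbar i x)
    (S₀ : Set X) (Sseq : ℕ → Set X)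
    (hS0 : Sseq 0 = S₀)
    (hSrec : ∀ k, Sseq (k + 1) =
      {x : X | ∀ i : I, ∃ x' ∈ Sseq k, ltil k i x' - Lx * dist x x' - Lt ≥ 0}) :
    (∀ (S : Set X) (lt : I → X → ℝ), (∀ i x, lt i x ≤ cbar i x) →
      {x : X | ∀ i : I, ∃ x' ∈ S, lt i x' - Lx * dist x x' - Lt ≥ 0} ⊆
        Rop cbar Lx Lt S) ∧
    (∀ k, Sseq k ⊆ ⋃ n : ℕ, (Rop cbar Lx Lt)^[n] S₀) := by
  have key : ∀ (S : Set X) (lt : I → X → ℝ), (∀ i x, lt i x ≤ cbar i x) →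
      {x : X | ∀ i : I, ∃ x' ∈ S, lt i x' - Lx * dist x x' - Lt ≥ 0} ⊆
        Rop cbar Lx Lt S := by
    intro S lt hlt x hx
    refine Or.inr fun i => ?_
    obtain ⟨x', hx', hge⟩ := hx i
    exact ⟨x', hx', le_trans hge (by linarith [hlt i x'])⟩
  refine ⟨key, ?_⟩
  intro k
  induction k with
  | zero =>
    rw [hS0]
    exact (Set.subset_iUnion (fun n => (Rop cbar Lx Lt)^[n] S₀) 0)
  | succ k ih =>
    rw [hSrec]
    intro x hx
    -- for each i, get x' in some iterate; take max index
    have hchoice : ∀ i : I, ∃ n : ℕ, ∃ x' ∈ (Rop cbar Lx Lt)^[n] S₀,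
        ltil k i x' - Lx * dist x x' - Lt ≥ 0 := by
      intro i
      obtain ⟨x', hx', hge⟩ := hx i
      obtain ⟨n, hn⟩ := Set.mem_iUnion.mp (ih hx')
      exact ⟨n, x', hn, hge⟩
    choose f hf using hchoice
    set N := Finset.univ.sup f with hN
    have hx' : x ∈ Rop cbar Lx Lt ((Rop cbar Lx Lt)^[N] S₀) := by
      apply key _ (ltil k) (hltil k)
      intro i
      obtain ⟨x', hx', hge⟩ := hf i
      exact ⟨x', Rop_iter_mono cbar Lx Lt S₀ (Finset.le_sup (Finset.mem_univ i)) hx', hge⟩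
    refine Set.mem_iUnion.mpr ⟨N + 1, ?_⟩
    rwa [Function.iterate_succ_apply']
end

section
/- Let (S̲ₖ)_{k≥0} be an increasing sequence of subsets of a set X (S̲ₖ ⊆ S̲_{k+1}), all contained in a finite set R with |R| = n. Let (Tₖ)_{k≥1} be a nondecreasing sequence of positive integers and let k* be an integer with k* ≥ n · T_{k*}. Then there exists k₀ ≤ k* such that S̲_{k₀ + T_{k₀}} = S̲_{k₀}. -/
theorem stmt_9 {X : Type*} (Sseq : ℕ → Set X)
    (hmono : ∀ k, Sseq k ⊆ Sseq (k + 1))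
    (Rset : Set X) (hfin : Rset.Finite) (n : ℕ) (hn : n = Rset.ncard)
    (hsub : ∀ k, Sseq k ⊆ Rset)
    (T : ℕ → ℕ) (hTpos : ∀ k, 0 < T k) (hTmono : ∀ k l, k ≤ l → T k ≤ T l)
    (kstar : ℕ) (hkstar : n * T kstar ≤ kstar) :
    ∃ k₀ ≤ kstar, Sseq (k₀ + T k₀) = Sseq k₀ := by
  by_contra h
  push_neg at h
  have hmono' : ∀ a b : ℕ, a ≤ b → Sseq a ⊆ Sseq b := by
    intro a b hab
    induction b with
    | zero =>
      have : a = 0 := Nat.le_zero.mp hab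
      subst this; exact subset_rfl
    | succ b ih =>
      rcases Nat.lt_or_ge a (b + 1) with h1 | h1
      · exact (ih (Nat.lt_succ_iff.mp h1)).trans (hmono b)
      · have : a = b + 1 := le_antisymm hab h1
        subst this; exact subset_rfl
  set g : ℕ → ℕ := fun i => Nat.rec 0 (fun _ k => k + T k) i with hg
  have hgsucc : ∀ i, g (i + 1) = g i + T (g i) := fun i => rfl
  have hgle : ∀ i ≤ n, g i ≤ i * T kstar := by
    intro i hi
    induction i with
    | zero => show (0:ℕ) ≤ 0 * T kstar; omega
    | succ i ih =>
      have hi' : i ≤ n := Nat.le_of_succ_le hi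
      have h1 : g i ≤ i * T kstar := ih hi'
      have h2 : g i ≤ kstar :=
        h1.trans ((Nat.mul_le_mul_right _ hi').trans hkstar)
      have h3 : T (g i) ≤ T kstar := hTmono _ _ h2
      calc g (i + 1) = g i + T (g i) := hgsucc i
        _ ≤ i * T kstar + T kstar := Nat.add_le_add h1 h3
        _ = (i + 1) * T kstar := by ring
  have hcard : ∀ i ≤ n + 1, i ≤ (Sseq (g i)).ncard := by
    intro i hi
    induction i with
    | zero => exact Nat.zero_le _
    | succ i ih =>
      have hi' : i ≤ n := Nat.lt_succ_iff.mp hi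
      have hk : g i ≤ kstar :=
        (hgle i hi').trans ((Nat.mul_le_mul_right _ hi').trans hkstar)
      have hne : Sseq (g i + T (g i)) ≠ Sseq (g i) := h (g i) hk
      have hss : Sseq (g i) ⊂ Sseq (g i + T (g i)) :=
        ⟨hmono' _ _ (Nat.le_add_right _ _), fun hsub' => hne (le_antisymm hsub' (hmono' _ _ (Nat.le_add_right _ _)))⟩
      have hfin2 : (Sseq (g i + T (g i))).Finite := hfin.subset (hsub _)
      have hlt : (Sseq (g i)).ncard < (Sseq (g i + T (g i))).ncard :=
        Set.ncard_lt_ncard hss hfin2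
      have := ih (Nat.le_of_succ_le hi)
      calc i + 1 ≤ (Sseq (g i)).ncard + 1 := Nat.add_le_add_right this 1
        _ ≤ (Sseq (g i + T (g i))).ncard := hlt
        _ = (Sseq (g (i + 1))).ncard := by rw [hgsucc]
  have hfinal : n + 1 ≤ (Sseq (g (n + 1))).ncard := hcard (n + 1) le_rfl
  have hle : (Sseq (g (n + 1))).ncard ≤ n := by
    rw [hn]; exact Set.ncard_le_ncard (hsub _) hfin
  omega
end

section
/- Let X be a set with pseudometric d, I finite, and for each k let lₖ, l̃ₖ : I → X → ℝ be families of functions with lₖ i x ≤ l̃ₖ i x and l̃ₖ i x − L̄ₜ_partial(k) ≤ lₖ i x for all i, x, where L̄ₜ_partial(k) = Σ_{j=0}^{k−1} L(j) with L(j) ≥ 0 and Σ_{j} L(j) ≤ L̄ₜ. Define three sequences of sets with common seed S₀: S̄ₖ uses l̃ₖ with margin 0, Sₖ uses lₖ with margin L(k), and S̲ₖ uses l̃ₖ with margin L̄ₜ, each via S_{next} = { x | ∀ i ∈ I, ∃ x' ∈ S_prev, (bound) i x' − L_x·d(x,x') − (margin) ≥ 0 }. Then for all k: S̲ₖ ⊆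 Sₖ ⊆ S̄ₖ. -/
open Finset in
theorem stmt_15 {X : Type*} [PseudoMetricSpace X] {I : Type*} [Fintype I]
    (Lx : ℝ) (hLx : 0 ≤ Lx)
    (L : ℕ → ℝ) (hL : ∀ j, 0 ≤ L j)
    (Lbar : ℝ) (hLbar : ∀ n, ∑ j ∈ range n, L j ≤ Lbar)
    (l ltil : ℕ → I → X → ℝ)
    (hle : ∀ k i x, l k i x ≤ ltil k i x)
    (hge : ∀ k i x, ltil k i x - ∑ j ∈ range k, L j ≤ l k i x)
    (S₀ : Set X) (Sbar S Sund : ℕ → Set X)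
    (hbar0 : Sbar 0 = S₀) (hS0 : S 0 = S₀) (hund0 : Sund 0 = S₀)
    (hbar : ∀ k, Sbar (k + 1) =
      {x : X | ∀ i : I, ∃ x' ∈ Sbar k, ltil (k + 1) i x' - Lx * dist x x' - 0 ≥ 0})
    (hS : ∀ k, S (k + 1) =
      {x : X | ∀ i : I, ∃ x' ∈ S k, l (k + 1) i x' - Lx * dist x x' - L (k + 1) ≥ 0})
    (hund : ∀ k, Sund (k + 1) =
      {x : X | ∀ i : I, ∃ x' ∈ Sund k, ltil (k + 1) i x' - Lx * dist x x' - Lbar ≥ 0}) :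
    ∀ k, Sund k ⊆ S k ∧ S k ⊆ Sbar k := by
  intro k
  induction k with
  | zero => rw [hund0, hS0, hbar0]; exact ⟨le_refl _, le_refl _⟩
  | succ k ih =>
    constructor
    · intro x hx
      rw [hund k] at hx
      rw [hS k]
      intro i
      obtain ⟨x', hx', h⟩ := hx i
      refine ⟨x', ih.1 hx', ?_⟩
      have h1 := hge (k + 1) i x'
      have h2 : ∑ j ∈ range (k + 1), L j + L (k + 1) ≤ Lbar := by
        have := hLbar (k + 2)
        rwa [Finset.sum_range_succ] at this
      linarith
    · intro x hx
      rw [hS k] at hx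
      rw [hbar k]
      intro i
      obtain ⟨x', hx', h⟩ := hx i
      refine ⟨x', ih.2 hx', ?_⟩
      have := hle (k + 1) i x'
      have := hL (k + 1)
      linarith
end
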